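/- In a deterministic concurrent system, for every state α, the partial order (𝒞_α, ≤) of cliques enabled at α is isomorphic to the full powerset (𝒫(Σ_α), ⊆); in particular any two letters a, b ∈ Σ_α with a ≠ b are independent and a·b ∈ M_α. -/

import Mathlib

namespace TraceDoc

/-- The elementary commutation relation on the free monoid induced by an
independence relation `I`. -/
def traceRel {S : Type*} (I : S → S → Prop) : FreeMonoid S → FreeMonoid S → Prop :=
  fun u v => ∃ a b, I a b ∧ u = FreeMonoid.of a * FreeMonoid.of b ∧
    v = FreeMonoid.of b * FreeMonoid.of a

/-- The congruence on the free monoid generated by the commutations of `I`. -/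
def traceCon {S : Type*} (I : S → S → Prop) : Con (FreeMonoid S) := conGen (traceRel I)

/-- The trace monoid `M(Σ, I)`. -/
abbrev TraceMonoid {S : Type*} (I : S → S → Prop) := (traceCon I).Quotient

/-- Canonical projection from words to traces. -/
def tproj {S : Type*} (I : S → S → Prop) : FreeMonoid S →* TraceMonoid I := (traceCon I).mk'

/-- Image of a letter in the trace monoid. -/
def temb {S : Type*} (I : S → S → Prop) (a : S) : TraceMonoid I := tproj I (FreeMonoid.of a)

/-- Any monoid hom to a commutative monoid factors through the trace congruence. -/
lemma traceCon_le_ker {S N : Type*} [CommMonoid N] (I : S → S → Prop)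
    (f : FreeMonoid S →* N) : traceCon I ≤ Con.ker f := by
  apply Con.conGen_le.2
  rintro u v ⟨a, b, _, rfl, rfl⟩
  simp [Con.ker_rel, map_mul, mul_comm]

/-- Length of a trace (well defined since commutations preserve length). -/
def tlen {S : Type*} (I : S → S → Prop) : TraceMonoid I → ℕ := fun x =>
  Multiplicative.toAdd
    (Con.lift _ (FreeMonoid.lift fun _ : S => Multiplicative.ofAdd (1 : ℕ))
      (traceCon_le_ker I _) x)

/-- Number of occurrences of the letter `a` in a trace (well defined). -/
def tcount {S : Type*} [DecidableEq S] (I : S → S → Prop) (a : S) : TraceMonoid I → ℕ := fun x =>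
  Multiplicative.toAdd
    (Con.lift _ (FreeMonoid.lift fun b : S =>
        Multiplicative.ofAdd (if b = a then (1 : ℕ) else 0))
      (traceCon_le_ker I _) x)

/-- Left divisibility in a trace monoid. -/
def tle {S : Type*} (I : S → S → Prop) (x y : TraceMonoid I) : Prop := ∃ z, y = x * z

/-- A clique: a finite set of pairwise independent letters. -/
def IsClique {S : Type*} (I : S → S → Prop) (s : Finset S) : Prop := (↑s : Set S).Pairwise I

/-- The type of cliques of the trace monoid. -/
abbrev Clique {S : Type*} (I : S → S → Prop) := {s : Finset S // IsClique I s}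

lemma temb_commute {S : Type*} {I : S → S → Prop} {a b : S} (h : I a b) :
    Commute (temb I a) (temb I b) := by
  have : (traceCon I) (FreeMonoid.of a * FreeMonoid.of b) (FreeMonoid.of b * FreeMonoid.of a) :=
    ConGen.Rel.of _ _ ⟨a, b, h, rfl, rfl⟩
  simpa [Commute, SemiconjBy, temb, tproj, ← map_mul] using (traceCon I).eq.2 this

/-- The product of a clique in the trace monoid. -/
def cprod {S : Type*} (I : S → S → Prop) (c : Clique I) : TraceMonoid I :=
  c.1.noncommProd (temb I) (fun a ha b hb hab => temb_commute (c.2 ha hb hab))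

/-- The Cartier–Foata normality relation `c → d` between cliques. -/
def NormalPair {S : Type*} (I : S → S → Prop) (c d : Clique I) : Prop :=
  ∀ b ∈ d.1, ∃ a ∈ c.1, ¬ I a b

/-- A concurrent system: a right action of the trace monoid on the states
`X` together with a sink `⊥` (modelled by `none`). -/
structure ConcurrentSystem {S : Type*} (I : S → S → Prop) (X : Type*) where
  act : Option X → TraceMonoid I → Option X
  act_one : ∀ α, act α 1 = α
  act_mul : ∀ α x y, act α (x * y) = act (act α x) y
  act_bot : ∀ x, act none x = none

/-- The set `M_α` of executions from state `α`. -/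
def ConcurrentSystem.execs {S : Type*} {I : S → S → Prop} {X : Type*}
    (C : ConcurrentSystem I X) (α : X) : Set (TraceMonoid I) :=
  {x | C.act (some α) x ≠ none}

end TraceDoc

namespace TraceDoc

section Aux

/-- Three-element monoid recording the first relevant letter. -/
inductive First where
  | id | yes | no
deriving DecidableEq

instance : Monoid First where
  one := .id
  mul x y := match x with | .id => y | .yes => .yes | .no => .no
  mul_assoc x y z := by cases x <;> rfl
  one_mul x := rfl
  mul_one x := by cases x <;> rfl

@[simp] lemma First.yes_mul (x : First) : First.yes * x = .yes := rfl
@[simp] lemma First.no_mul (x : First) : First.no * x = .no := rfl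
@[simp] lemma First.id_mul (x : First) : First.id * x = x := rfl
@[simp] lemma First.one_def : (1 : First) = .id := rfl

open Classical in
/-- Letter-wise value: `yes` for `b`, `id` for letters independent from `b`,
`no` for other letters dependent on `b`. -/
noncomputable def fletter {S : Type*} (I : S → S → Prop) (b : S) : S → First := fun c =>
  if c = b then .yes else if I c b then .id else .no

lemma fletter_ker {S : Type*} {I : S → S → Prop} (hsym : Symmetric I) (hirr : ∀ a, ¬ I a a)
    (b : S) : traceCon I ≤ Con.ker (FreeMonoid.lift (fletter I b)) := by
  apply Con.conGen_le.2
  rintro u v ⟨c, d, hcd, rfl, rfl⟩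
  simp only [Con.ker_rel, map_mul, FreeMonoid.lift_eval_of]
  unfold fletter
  by_cases hc : c = b <;> by_cases hd : d = b
  · subst hc; subst hd; exact absurd hcd (hirr _)
  · subst hc; simp [hd, hsym hcd]
  · subst hd; simp [hc, hcd]
  · by_cases h1 : I c b <;> by_cases h2 : I d b <;> simp [hc, hd, h1, h2]

/-- The "first relevant letter with respect to `b`" invariant of a trace. -/
noncomputable def Fb {S : Type*} (I : S → S → Prop) (hsym : Symmetric I)
    (hirr : ∀ a, ¬ I a a) (b : S) : TraceMonoid I →* First :=
  Con.lift _ (FreeMonoid.lift (fletter I b)) (fletter_ker hsym hirr b)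

lemma Fb_tproj {S : Type*} {I : S → S → Prop} (hsym : Symmetric I) (hirr : ∀ a, ¬ I a a)
    (b : S) (w : FreeMonoid S) :
    Fb I hsym hirr b (tproj I w) = FreeMonoid.lift (fletter I b) w :=
  Con.lift_mk' _ _

lemma Fb_temb {S : Type*} {I : S → S → Prop} (hsym : Symmetric I) (hirr : ∀ a, ¬ I a a)
    (b c : S) : Fb I hsym hirr b (temb I c) = fletter I b c := by
  rw [temb, Fb_tproj, FreeMonoid.lift_eval_of]

lemma pull_list {S : Type*} {I : S → S → Prop} (hsym : Symmetric I) (hirr : ∀ a, ¬ I a a)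
    (b : S) : ∀ l : List S, Fb I hsym hirr b (tproj I (FreeMonoid.ofList l)) = .yes →
      ∃ t, tproj I (FreeMonoid.ofList l) = temb I b * t := by
  intro l
  induction l with
  | nil =>
      intro h
      exfalso
      have : FreeMonoid.ofList ([] : List S) = (1 : FreeMonoid S) := rfl
      rw [this, map_one, map_one] at h
      simp at h
  | cons c l ih =>
      intro h
      rw [FreeMonoid.ofList_cons, map_mul, map_mul] at h
      rw [show Fb I hsym hirr b (tproj I (FreeMonoid.of c)) = fletter I b c from
        Fb_temb hsym hirr b c] at h
      rw [FreeMonoid.ofList_cons, map_mul]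
      by_cases hc : c = b
      · subst hc
        exact ⟨tproj I (FreeMonoid.ofList l), rfl⟩
      · by_cases hI : I c b
        · have hfl : fletter I b c = .id := by simp [fletter, hc, hI]
          rw [hfl, First.id_mul] at h
          obtain ⟨t, ht⟩ := ih h
          refine ⟨tproj I (FreeMonoid.of c) * t, ?_⟩
          rw [ht, ← mul_assoc, ← mul_assoc]
          congr 1
          exact (temb_commute hI).eq
        · have hfl : fletter I b c = .no := by simp [fletter, hc, hI]
          rw [hfl, First.no_mul] at h
          exact absurd h (by simp)

lemma pull {S : Type*} {I : S → S → Prop} (hsym : Symmetric I) (hirr : ∀ a, ¬ I a a)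
    (b : S) (x : TraceMonoid I) (h : Fb I hsym hirr b x = .yes) :
    ∃ t, x = temb I b * t := by
  induction x using Con.induction_on with
  | H w =>
      have hw : ((w : TraceMonoid I)) = tproj I (FreeMonoid.ofList w.toList) := by
        rw [FreeMonoid.ofList_toList]; rfl
      rw [hw] at h ⊢
      exact pull_list hsym hirr b w.toList h

lemma execs_prefix {S X : Type*} {I : S → S → Prop} (C : ConcurrentSystem I X) (α : X)
    {x z : TraceMonoid I} (hz : z ∈ C.execs α) (h : tle I x z) : x ∈ C.execs α := by
  obtain ⟨w, rfl⟩ := h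
  simp only [ConcurrentSystem.execs, Set.mem_setOf_eq, C.act_mul] at hz ⊢
  intro hx
  rw [hx, C.act_bot] at hz
  exact hz rfl

lemma key {S : Type*} {I : S → S → Prop} (hsym : Symmetric I) (hirr : ∀ a, ¬ I a a)
    {b : S} {x z : TraceMonoid I} (hxz : tle I x z) (hbz : tle I (temb I b) z)
    (hx : Fb I hsym hirr b x = 1) : ∃ w, z = x * temb I b * w := by
  obtain ⟨u, rfl⟩ := hxz
  obtain ⟨v, hv⟩ := hbz
  have hyes : Fb I hsym hirr b (x * u) = .yes := by
    rw [hv, map_mul, Fb_temb]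
    simp [fletter]
  rw [map_mul, hx, First.one_def, First.id_mul] at hyes
  obtain ⟨t, rfl⟩ := pull hsym hirr b u hyes
  exact ⟨t, by rw [mul_assoc]⟩

end Aux

end TraceDoc

open TraceDoc in
/-- In a deterministic concurrent system, the enabled cliques at a state `α`
form the full powerset of the enabled letters: distinct enabled letters are
independent and every set of enabled letters is an enabled clique. -/
theorem stmt13 {S X : Type*} [Fintype S] [Fintype X]
    (I : S → S → Prop) (hsym : Symmetric I) (hirr : ∀ a, ¬ I a a)
    (C : ConcurrentSystem I X)
    (hdet : ∀ (α : X) (x y : TraceMonoid I), x ∈ C.execs α → y ∈ C.execs α →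
      ∃ z ∈ C.execs α, tle I x z ∧ tle I y z) :
    ∀ α : X,
      (∀ a b : S, temb I a ∈ C.execs α → temb I b ∈ C.execs α → a ≠ b →
        I a b ∧ temb I a * temb I b ∈ C.execs α) ∧
      (∀ s : Finset S, (∀ a ∈ s, temb I a ∈ C.execs α) →
        ∃ c : Clique I, c.1 = s ∧ cprod I c ∈ C.execs α) := by
  intro α
  have part1 : ∀ a b : S, temb I a ∈ C.execs α → temb I b ∈ C.execs α → a ≠ b →
      I a b ∧ temb I a * temb I b ∈ C.execs α := by
    intro a b ha hb hab
    obtain ⟨z, hz, haz, hbz⟩ := hdet α (temb I a) (temb I b) ha hb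
    have hIab : I a b := by
      by_contra hI
      obtain ⟨u, hu⟩ := haz
      obtain ⟨v, hv⟩ := hbz
      have h1 : Fb I hsym hirr b z = .yes := by
        rw [hv, map_mul, Fb_temb]; simp [fletter]
      have h2 : Fb I hsym hirr b z = .no := by
        rw [hu, map_mul, Fb_temb]
        have hfl : fletter I b a = .no := by simp [fletter, hab, hI]
        rw [hfl, First.no_mul]
      rw [h1] at h2
      exact absurd h2 (by simp)
    refine ⟨hIab, ?_⟩
    have hFa : Fb I hsym hirr b (temb I a) = 1 := by
      rw [Fb_temb]; simp [fletter, hab, hIab]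
    obtain ⟨w, hw⟩ := key hsym hirr haz hbz hFa
    exact execs_prefix C α hz ⟨w, hw⟩
  refine ⟨part1, ?_⟩
  intro s hs
  classical
  have hI : ∀ a ∈ s, ∀ b ∈ s, a ≠ b → I a b := fun a ha b hb hab =>
    (part1 a b (hs a ha) (hs b hb) hab).1
  have aux : ∀ t : Finset S, ∀ hIt : ∀ a ∈ t, ∀ b ∈ t, a ≠ b → I a b,
      (∀ a ∈ t, temb I a ∈ C.execs α) →
      t.noncommProd (temb I) (fun a ha b hb hab => temb_commute (hIt a ha b hb hab))
        ∈ C.execs α := by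
    intro t
    induction t using Finset.induction_on with
    | empty =>
        intro _ _
        show (1 : TraceMonoid I) ∈ C.execs α
        simp [ConcurrentSystem.execs, C.act_one]
    | @insert a t hat ih =>
        intro hIt hent
        have hIt' : ∀ c ∈ t, ∀ d ∈ t, c ≠ d → I c d := fun c hc d hd h =>
          hIt c (Finset.mem_insert_of_mem hc) d (Finset.mem_insert_of_mem hd) h
        have hx := ih hIt' (fun c hc => hent c (Finset.mem_insert_of_mem hc))
        have ha' : temb I a ∈ C.execs α := hent a (Finset.mem_insert_self a t)
        obtain ⟨z, hz, hxz, haz⟩ := hdet α _ (temb I a) hx ha'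
        have hFx : Fb I hsym hirr a
            (t.noncommProd (temb I) (fun c hc d hd h => temb_commute (hIt' c hc d hd h))) = 1 := by
          refine Finset.noncommProd_induction t (temb I) _
            (fun y => Fb I hsym hirr a y = 1) ?_ ?_ ?_
          · intro u v hu hv
            rw [map_mul, hu, hv, one_mul]
          · exact map_one _
          · intro c hc
            have hca : c ≠ a := fun h => hat (h ▸ hc)
            have hIca : I c a := hIt c (Finset.mem_insert_of_mem hc) a
              (Finset.mem_insert_self a t) hca
            rw [Fb_temb]
            simp [fletter, hca, hIca]
        obtain ⟨w, hw⟩ := key hsym hirr hxz haz hFx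
        have hcomm : Commute (temb I a)
            (t.noncommProd (temb I) (fun c hc d hd h => temb_commute (hIt' c hc d hd h))) :=
          Finset.noncommProd_commute t (temb I) _ _ (fun c hc =>
            temb_commute (hIt a (Finset.mem_insert_self a t) c
              (Finset.mem_insert_of_mem hc) (fun h => hat (h ▸ hc))))
        refine (congrArg (· ∈ C.execs α) (Finset.noncommProd_insert_of_notMem t a (temb I) _ hat)).mpr ?_
        refine execs_prefix C α hz ⟨w, ?_⟩
        rw [hw, ← hcomm.eq, mul_assoc, ← mul_assoc]
  exact ⟨⟨s, fun a ha b hb hab => hI a ha b hb hab⟩, rfl, aux s hI hs⟩
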